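/- Let τ be a positive semidefinite matrix on a bipartite space ℂᵐ ⊗ ℂⁿ. Then Tr[τ] ≤ ‖τ^Γ‖₁, with equality if and only if τ^Γ is positive semidefinite. Consequently every τ ∈ T satisfies Tr[τ] ≤ 1, and τ ∈ T has Tr[τ] = 1 if and only if τ is a PPT state (τ^Γ ≥ 0 and Tr τ = 1). -/

import Mathlib

open Matrix
open scoped ComplexOrder

noncomputable def traceNorm {ι : Type*} [Fintype ι] [DecidableEq ι]
    (A : Matrix ι ι ℂ) : ℝ :=
  (((Matrix.posSemidef_conjTranspose_mul_self A).1.eigenvectorUnitary.1 *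
      Matrix.diagonal ((fun x : ℝ => (x : ℂ)) ∘ (Real.sqrt ·) ∘ (Matrix.posSemidef_conjTranspose_mul_self A).1.eigenvalues) *
      (star (Matrix.posSemidef_conjTranspose_mul_self A).1.eigenvectorUnitary : Matrix ι ι ℂ)).trace).re

noncomputable def mfun {ι : Type*} [Fintype ι] [DecidableEq ι] (g : ℝ → ℝ)
    (A : Matrix ι ι ℂ) : Matrix ι ι ℂ :=
  if hA : A.IsHermitian then
    (hA.eigenvectorUnitary : Matrix ι ι ℂ) *
      Matrix.diagonal (fun i => (g (hA.eigenvalues i) : ℂ)) *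
      (star hA.eigenvectorUnitary : Matrix ι ι ℂ)
  else 0

noncomputable def divDiff {ι : Type*} (g : ℝ → ℝ) (a : ι → ℝ) : Matrix ι ι ℝ :=
  Matrix.of fun i j =>
    if a i = a j then deriv g (a i) else (g (a i) - g (a j)) / (a i - a j)

noncomputable def Dop {ι : Type*} [Fintype ι] [DecidableEq ι] (g : ℝ → ℝ)
    {A : Matrix ι ι ℂ} (hA : A.IsHermitian) (B : Matrix ι ι ℂ) : Matrix ι ι ℂ :=
  (hA.eigenvectorUnitary : Matrix ι ι ℂ) *
    (((divDiff g hA.eigenvalues).map Complex.ofReal) ⊙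
      ((star hA.eigenvectorUnitary : Matrix ι ι ℂ) * B *
        (hA.eigenvectorUnitary : Matrix ι ι ℂ))) *
    (star hA.eigenvectorUnitary : Matrix ι ι ℂ)

noncomputable def relEnt {ι : Type*} [Fintype ι] [DecidableEq ι]
    (ρ σ : Matrix ι ι ℂ) : ℝ :=
  ((ρ * (mfun Real.log ρ - mfun Real.log σ)).trace).re

def ptrans {m n : Type*} (A : Matrix (m × n) (m × n) ℂ) : Matrix (m × n) (m × n) ℂ :=
  Matrix.of fun p q => A (p.1, q.2) (q.1, p.2)

/-
For a hermitian matrix the trace is the sum of the eigenvalues and the trace norm the sum of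
their absolute values, so `Tr A ≤ ‖A‖₁`, with equality exactly when no eigenvalue is negative.
The partial transpose of a positive semidefinite `τ` is hermitian and has the same trace as `τ`;
applied to `A = τ^Γ` this gives the theorem.
-/

namespace Matrix

variable {ι : Type*} [Fintype ι] [DecidableEq ι]

lemma traceNorm_eq_re_trace_cfc_sqrt (A : Matrix ι ι ℂ) :
    traceNorm A = (cfc Real.sqrt (Aᴴ * A)).trace.re := by
  rw [(posSemidef_conjTranspose_mul_self A).1.cfc_eq]
  rfl

lemma IsHermitian.trace_cfc {𝕜 : Type*} [RCLike 𝕜] {A : Matrix ι ι 𝕜} (hA : A.IsHermitian)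
    (f : ℝ → ℝ) :
    (cfc f A).trace = ∑ i, (f (hA.eigenvalues i) : 𝕜) := by
  rw [hA.cfc_eq, IsHermitian.cfc, Unitary.conjStarAlgAut_apply, trace_mul_cycle,
    Unitary.coe_star_mul_self, one_mul, trace_diagonal]
  rfl

lemma IsHermitian.traceNorm_eq_sum_abs_eigenvalues {A : Matrix ι ι ℂ} (hA : A.IsHermitian) :
    traceNorm A = ∑ i, |hA.eigenvalues i| := by
  have hsqrt : cfc Real.sqrt (Aᴴ * A) = cfc (fun x : ℝ => |x|) A := by
    rw [hA.eq, ← sq, ← cfc_comp_pow (f := Real.sqrt) (a := A) (n := 2)]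
    simp only [Real.sqrt_sq_eq_abs]
  rw [traceNorm_eq_re_trace_cfc_sqrt, hsqrt, hA.trace_cfc, Complex.re_sum]
  simp only [Complex.coe_algebraMap, Complex.ofReal_re]

lemma IsHermitian.re_trace_eq_sum_eigenvalues {A : Matrix ι ι ℂ} (hA : A.IsHermitian) :
    A.trace.re = ∑ i, hA.eigenvalues i := by
  simp [hA.trace_eq_sum_eigenvalues]

lemma IsHermitian.re_trace_le_traceNorm {A : Matrix ι ι ℂ} (hA : A.IsHermitian) :
    A.trace.re ≤ traceNorm A := by
  rw [hA.re_trace_eq_sum_eigenvalues, hA.traceNorm_eq_sum_abs_eigenvalues]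
  exact Finset.sum_le_sum fun i _ => le_abs_self _

lemma IsHermitian.re_trace_eq_traceNorm_iff {A : Matrix ι ι ℂ} (hA : A.IsHermitian) :
    A.trace.re = traceNorm A ↔ A.PosSemidef := by
  rw [hA.re_trace_eq_sum_eigenvalues, hA.traceNorm_eq_sum_abs_eigenvalues,
    Finset.sum_eq_sum_iff_of_le fun i _ => le_abs_self _, hA.posSemidef_iff_eigenvalues_nonneg]
  simp only [Finset.mem_univ, true_implies, Pi.le_def, Pi.zero_apply,
    eq_comm (a := hA.eigenvalues _), abs_eq_self]

lemma IsHermitian.ptrans {m n : Type*} {A : Matrix (m × n) (m × n) ℂ} (hA : A.IsHermitian) :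
    (ptrans A).IsHermitian := by
  ext p q
  exact congr_fun₂ hA (p.1, q.2) (q.1, p.2)

@[simp]
lemma trace_ptrans {m n : Type*} [Fintype m] [Fintype n] (A : Matrix (m × n) (m × n) ℂ) :
    (ptrans A).trace = A.trace :=
  rfl

end Matrix

theorem trace_le_traceNorm_partialTranspose
    {m n : ℕ} (τ : Matrix (Fin m × Fin n) (Fin m × Fin n) ℂ) (hτ : τ.PosSemidef) :
    (τ.trace).re ≤ traceNorm (ptrans τ) ∧
      ((τ.trace).re = traceNorm (ptrans τ) ↔ (ptrans τ).PosSemidef) ∧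
      (traceNorm (ptrans τ) ≤ 1 →
        (τ.trace).re ≤ 1 ∧
          ((τ.trace).re = 1 ↔ (ptrans τ).PosSemidef ∧ (τ.trace).re = 1)) := by
  have hΓ := hτ.isHermitian.ptrans
  have hle : τ.trace.re ≤ traceNorm (ptrans τ) := τ.trace_ptrans ▸ hΓ.re_trace_le_traceNorm
  have heq : τ.trace.re = traceNorm (ptrans τ) ↔ (ptrans τ).PosSemidef :=
    τ.trace_ptrans ▸ hΓ.re_trace_eq_traceNorm_iff
  refine ⟨hle, heq, fun hnorm => ⟨hle.trans hnorm, fun htr => ⟨heq.mp ?_, htr⟩, And.right⟩⟩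
  exact le_antisymm hle (htr ▸ hnorm)
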